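/- arXiv:1712.07144 — 6 statements merged into one kernel-verified Lean document; each statement's English description precedes it below -/
import Mathlib

section
/- Let d ∈ ℕ, let F : (Fin d → ℝ) → (Fin d → ℝ), and let S : ℝ → (Fin d → ℝ) → (Fin d → ℝ) be a flow of F, i.e. S 0 x = x for all x and for every x the curve t ↦ S t x is differentiable at every t ∈ ℝ with derivative F (S t x). Let λ ∈ ℂ and let g : (Fin d → ℝ) → ℂ be differentiable. If g (S t x) = Complex.exp (λ * t) * g x for all t ∈ ℝ and all x, then for every x the Fréchet derivative of g at x applied to the vector F x equals λ * g x; that is, g solves the linear PDE ∇g · F = λ g. (Forward direction of Theorem 2 of the paper.) -/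
open Complex

theorem hasDerivAt_cexp_mul_ofReal_mul_const (lam c : ℂ) (t : ℝ) :
    HasDerivAt (fun s : ℝ => cexp (lam * s) * c) (lam * cexp (lam * t) * c) t := by
  have hlin : HasDerivAt (fun s : ℝ => lam * (s : ℂ)) lam t := by
    simpa using (ofRealCLM.hasDerivAt (x := t)).const_mul lam
  simpa [mul_comm] using hlin.cexp.mul_const c

theorem fderiv_apply_eq_mul_of_eigenfunction_along_curve
    {E : Type*} [NormedAddCommGroup E] [NormedSpace ℝ E]
    {γ : ℝ → E} {v : E} {g : E → ℂ} {lam : ℂ}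
    (hγ : HasDerivAt γ v 0) (hg : DifferentiableAt ℝ g (γ 0))
    (heig : ∀ t : ℝ, g (γ t) = cexp (lam * t) * g (γ 0)) :
    fderiv ℝ g (γ 0) v = lam * g (γ 0) := by
  have hchain : HasDerivAt (fun t => g (γ t)) (fderiv ℝ g (γ 0) v) 0 :=
    hg.hasFDerivAt.comp_hasDerivAt 0 hγ
  have hexp : HasDerivAt (fun t => g (γ t)) (lam * g (γ 0)) 0 := by
    simpa [funext heig] using hasDerivAt_cexp_mul_ofReal_mul_const lam (g (γ 0)) 0
  exact hchain.unique hexp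

/-- Forward direction of Theorem 2 of the paper: a differentiable Koopman eigenfunction
of the flow S of the vector field F with eigenvalue λ solves the linear PDE ∇g · F = λ g. -/
theorem koopman_eigenfunction_solves_pde
    {d : ℕ} (F : (Fin d → ℝ) → (Fin d → ℝ))
    (S : ℝ → (Fin d → ℝ) → (Fin d → ℝ))
    (hS0 : ∀ x, S 0 x = x)
    (hS : ∀ x : Fin d → ℝ, ∀ t : ℝ, HasDerivAt (fun s => S s x) (F (S t x)) t)
    (lam : ℂ) (g : (Fin d → ℝ) → ℂ) (hg : Differentiable ℝ g)
    (heig : ∀ t : ℝ, ∀ x : Fin d → ℝ, g (S t x) = Complex.exp (lam * t) * g x) :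
    ∀ x : Fin d → ℝ, fderiv ℝ g x (F x) = lam * g x := by
  intro x
  have hflow : HasDerivAt (fun t => S t x) (F x) 0 := by
    simpa only [hS0] using hS x 0
  have heig_x : ∀ t : ℝ, g (S t x) = cexp (lam * t) * g (S 0 x) := by
    simpa only [hS0] using (heig · x)
  simpa only [hS0] using fderiv_apply_eq_mul_of_eigenfunction_along_curve hflow (hg _) heig_x
end

section
/- Let d ∈ ℕ, let F : (Fin d → ℝ) → (Fin d → ℝ), and let S : ℝ → (Fin d → ℝ) → (Fin d → ℝ) be a flow of F, i.e. S 0 x = x for all x and for every x the curve t ↦ S t x is differentiable at every t ∈ ℝ with derivative F (S t x). Let λ ∈ ℂ and let g : (Fin d → ℝ) → ℂ be differentiable with fderiv ℝ g x (F x) = λ * g x for every x (g solves the linear PDE ∇g · F = λ g). Then g (S t x) = Complex.exp (λ * t) * g x for all t ∈ ℝ and all x; that is, g is a Koopman eigenfunction of the flow S with eigenvalue λ. (Converse direction of Theorem 2 of the paper: solutions of the Koopman PDE are Koopman eigenfunctions.) -/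
/-!
Along a trajectory `s ↦ S s x` the chain rule and the PDE turn `u s = g (S s x)` into a solution
of the scalar linear ODE `u' = λ u`; multiplying by `exp (-λ s)` gives a function with zero
derivative, so `u t = exp (λ t) u 0 = exp (λ t) g x`.
-/

open Complex

theorem eq_exp_mul_smul_of_hasDerivAt_eq_smul {E : Type*} [NormedAddCommGroup E] [NormedSpace ℂ E]
    {u : ℝ → E} {lam : ℂ} (hu : ∀ t, HasDerivAt u (lam • u t) t) (t : ℝ) :
    u t = exp (lam * t) • u 0 := by
  set v : ℝ → E := fun s => exp (-lam * s) • u s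
  have hexp (s : ℝ) : HasDerivAt (fun s : ℝ => exp (-lam * s)) (exp (-lam * s) * -lam) s := by
    simpa using ((hasDerivAt_id s).ofReal_comp.const_mul (-lam)).cexp
  have hv (s : ℝ) : HasDerivAt v 0 s := by
    refine ((hexp s).smul (hu s)).congr_deriv ?_
    rw [smul_smul, ← add_smul, mul_neg, add_neg_cancel, zero_smul]
  have hv_const : v t = v 0 :=
    is_const_of_deriv_eq_zero (fun s => (hv s).differentiableAt) (fun s => (hv s).deriv) t 0
  calc u t = exp (lam * t) • v t := by simp [v, smul_smul, ← exp_add]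
    _ = exp (lam * t) • u 0 := by rw [hv_const]; simp [v]

/-- Converse direction of Theorem 2 of the paper: a differentiable solution of the linear
PDE ∇g · F = λ g is a Koopman eigenfunction of the flow S of F with eigenvalue λ. -/
theorem pde_solution_is_koopman_eigenfunction
    {d : ℕ} (F : (Fin d → ℝ) → (Fin d → ℝ))
    (S : ℝ → (Fin d → ℝ) → (Fin d → ℝ))
    (hS0 : ∀ x, S 0 x = x)
    (hS : ∀ x : Fin d → ℝ, ∀ t : ℝ, HasDerivAt (fun s => S s x) (F (S t x)) t)
    (lam : ℂ) (g : (Fin d → ℝ) → ℂ) (hg : Differentiable ℝ g)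
    (hpde : ∀ x : Fin d → ℝ, fderiv ℝ g x (F x) = lam * g x) :
    ∀ t : ℝ, ∀ x : Fin d → ℝ, g (S t x) = Complex.exp (lam * t) * g x := by
  intro t x
  have hode (s : ℝ) : HasDerivAt (fun s => g (S s x)) (lam • g (S s x)) s := by
    rw [smul_eq_mul, ← hpde]
    exact (hg (S s x)).hasFDerivAt.comp_hasDerivAt s (hS x s)
  simpa [hS0] using eq_exp_mul_smul_of_hasDerivAt_eq_smul hode t
end

section
/- Let d, N ∈ ℕ, let T¹, T² : (Fin d → ℝ) → (Fin d → ℝ), and let h : (Fin d → ℝ) → (Fin d → ℝ) be a bijection with h (T¹ x) = T² (h x) for all x. Let ψ₁, …, ψ_N : (Fin d → ℝ) → ℂ be linearly independent (if ∑_j a_j * ψ_j x = 0 for all x then a = 0). Suppose there are N × N complex matrices K¹, K², H such that for all j and all x: ψ_j (T¹ x) = ∑_k K¹ j k * ψ_k x, ψ_j (T² x) = ∑_k K² j k * ψ_k x, and ψ_j (h x) = ∑_k H j k * ψ_k x (assumptions (A1) and (A2)). Suppose moreover that for i = 1, 2 the matrix K^i is diagonalizable with N distinct eigenvalues: there exist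 an invertible matrix V^i and a diagonal matrix Λ^i with pairwise distinct diagonal entries such that V^i * K^i = Λ^i * V^i. Then K¹ and K² are similar: there exists an invertible N × N complex matrix M with K² = M * K¹ * M⁻¹. (Theorem 3(i), EDMD-M, of the paper.) -/
/-- Theorem 3(i) of the paper (EDMD-M): under assumptions (A1)-(A3), if the restricted
Koopman matrices K¹ and K² of two conjugate systems are each diagonalizable with distinct
eigenvalues, then K¹ and K² are similar. -/
theorem edmd_m_matrices_similar
    {d N : ℕ} (T1 T2 : (Fin d → ℝ) → (Fin d → ℝ))
    (h : (Fin d → ℝ) → (Fin d → ℝ)) (hbij : Function.Bijective h)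
    (hconj : ∀ x, h (T1 x) = T2 (h x))
    (ψ : Fin N → (Fin d → ℝ) → ℂ)
    (hli : ∀ a : Fin N → ℂ, (∀ x, ∑ j, a j * ψ j x = 0) → a = 0)
    (K1 K2 H : Matrix (Fin N) (Fin N) ℂ)
    (hK1 : ∀ (j : Fin N) (x : Fin d → ℝ), ψ j (T1 x) = ∑ k, K1 j k * ψ k x)
    (hK2 : ∀ (j : Fin N) (x : Fin d → ℝ), ψ j (T2 x) = ∑ k, K2 j k * ψ k x)
    (hH : ∀ (j : Fin N) (x : Fin d → ℝ), ψ j (h x) = ∑ k, H j k * ψ k x)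
    (V1 V2 : Matrix (Fin N) (Fin N) ℂ) (Λ1 Λ2 : Fin N → ℂ)
    (hV1 : IsUnit V1.det) (hV2 : IsUnit V2.det)
    (hΛ1 : Function.Injective Λ1) (hΛ2 : Function.Injective Λ2)
    (hdiag1 : V1 * K1 = Matrix.diagonal Λ1 * V1)
    (hdiag2 : V2 * K2 = Matrix.diagonal Λ2 * V2) :
    ∃ M : Matrix (Fin N) (Fin N) ℂ, IsUnit M.det ∧ K2 = M * K1 * M⁻¹ := by
  -- Step 1: intertwining relation H * K1 = K2 * H
  have hint : H * K1 = K2 * H := by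
    ext j k
    have := hli (fun k => (H * K1) j k - (K2 * H) j k) ?_
    · have := congrFun this k
      simpa [sub_eq_zero] using this
    · intro x
      have e1 : ψ j (h (T1 x)) = ∑ l, (H * K1) j l * ψ l x := by
        rw [hH]
        simp only [hK1, Finset.mul_sum, Matrix.mul_apply, Finset.sum_mul]
        rw [Finset.sum_comm]
        simp [mul_assoc]
      have e2 : ψ j (T2 (h x)) = ∑ l, (K2 * H) j l * ψ l x := by
        rw [hK2]
        simp only [hH, Finset.mul_sum, Matrix.mul_apply, Finset.sum_mul]
        rw [Finset.sum_comm]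
        simp [mul_assoc]
      have := e1.symm.trans (by rw [hconj x, e2])
      simp [sub_mul, Finset.sum_sub_distrib, this]
  -- Step 2: H is invertible
  have hHdet : IsUnit H.det := by
    rw [isUnit_iff_ne_zero]
    intro hdet
    obtain ⟨a, ha, hva⟩ := (Matrix.exists_vecMul_eq_zero_iff).2 hdet
    apply ha
    apply hli
    intro y
    obtain ⟨x, rfl⟩ := hbij.surjective y
    have : ∑ j, a j * ψ j (h x) = ∑ k, (Matrix.vecMul a H) k * ψ k x := by
      simp only [hH, Finset.mul_sum, Matrix.vecMul, dotProduct, Finset.sum_mul]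
      rw [Finset.sum_comm]
      simp [mul_assoc]
    rw [this, hva]
    simp
  refine ⟨H, hHdet, ?_⟩
  rw [hint, mul_assoc, Matrix.mul_nonsing_inv _ hHdet, mul_one]
end

section
/- Let d, N ∈ ℕ, let T¹, T² : (Fin d → ℝ) → (Fin d → ℝ), and let h : (Fin d → ℝ) → (Fin d → ℝ) be a bijection with h (T¹ x) = T² (h x) for all x. Let ψ₁, …, ψ_N : (Fin d → ℝ) → ℂ be linearly independent, and suppose there are N × N complex matrices K¹, K², H with, for all j and x: ψ_j (T¹ x) = ∑_k K¹ j k * ψ_k x, ψ_j (T² x) = ∑_k K² j k * ψ_k x, and ψ_j (h x) = ∑_k H j k * ψ_k x. Suppose there exist invertible N × N matrices V¹, V² and a single diagonal matrix Λ with pairwise distinct diagonal entries such that V¹ * K¹ = Λ * V¹ and V² * K² = Λ * V² (matched eigenvalue ordering). Suppose further (A4): there is a d × N complex matrix B such that for every coordinate ℓ and every x, the coordinate projection satisfies (x ℓ : ℂ) = ∑_j B ℓ j * ψ_j x. Finally suppose (A5): there is a point z₀ such that ∑_k V¹ j k * ψ_k z₀ ≠ 0 for every j; let D be the diagonal matrix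 with D j j = (∑_k V² j k * ψ_k (h z₀)) / (∑_k V¹ j k * ψ_k z₀). Then the matching transformation is recovered from the dictionary: for every z and every coordinate ℓ, ((h z) ℓ : ℂ) = ∑_j (B * (V²)⁻¹ * D * V¹) ℓ j * ψ_j z. (Theorem 3(ii), EDMD-M, of the paper: h(z) = B [V²]⁻¹ D V¹ Ψ(z).) -/
lemma mul_apply_sum' {m n p : Type*} [Fintype n] [Fintype p]
    (A : Matrix m n ℂ) (C : Matrix n p ℂ) (j : m) (f : p → ℂ) :
    ∑ k, (A * C) j k * f k = ∑ i, A j i * ∑ k, C i k * f k := by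
  simp only [Matrix.mul_apply, Finset.sum_mul, Finset.mul_sum, mul_assoc]
  rw [Finset.sum_comm]


/-- Theorem 3(ii) of the paper (EDMD-M): under assumptions (A1)-(A5), the matching
transformation h is recovered from the dictionary as h(z) = B [V²]⁻¹ D V¹ Ψ(z). -/
theorem edmd_m_recovers_transformation
    {d N : ℕ} (T1 T2 : (Fin d → ℝ) → (Fin d → ℝ))
    (h : (Fin d → ℝ) → (Fin d → ℝ)) (hbij : Function.Bijective h)
    (hconj : ∀ x, h (T1 x) = T2 (h x))
    (ψ : Fin N → (Fin d → ℝ) → ℂ)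
    (hli : ∀ a : Fin N → ℂ, (∀ x, ∑ j, a j * ψ j x = 0) → a = 0)
    (K1 K2 H : Matrix (Fin N) (Fin N) ℂ)
    (hK1 : ∀ (j : Fin N) (x : Fin d → ℝ), ψ j (T1 x) = ∑ k, K1 j k * ψ k x)
    (hK2 : ∀ (j : Fin N) (x : Fin d → ℝ), ψ j (T2 x) = ∑ k, K2 j k * ψ k x)
    (hH : ∀ (j : Fin N) (x : Fin d → ℝ), ψ j (h x) = ∑ k, H j k * ψ k x)
    (V1 V2 : Matrix (Fin N) (Fin N) ℂ) (Λ : Fin N → ℂ)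
    (hV1 : IsUnit V1.det) (hV2 : IsUnit V2.det)
    (hΛ : Function.Injective Λ)
    (hdiag1 : V1 * K1 = Matrix.diagonal Λ * V1)
    (hdiag2 : V2 * K2 = Matrix.diagonal Λ * V2)
    (B : Matrix (Fin d) (Fin N) ℂ)
    (hB : ∀ (ℓ : Fin d) (x : Fin d → ℝ), (x ℓ : ℂ) = ∑ j, B ℓ j * ψ j x)
    (z₀ : Fin d → ℝ)
    (hz₀ : ∀ j : Fin N, ∑ k, V1 j k * ψ k z₀ ≠ 0)
    (D : Matrix (Fin N) (Fin N) ℂ)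
    (hD : D = Matrix.diagonal fun j =>
      (∑ k, V2 j k * ψ k (h z₀)) / (∑ k, V1 j k * ψ k z₀)) :
    ∀ (z : Fin d → ℝ) (ℓ : Fin d),
      ((h z) ℓ : ℂ) = ∑ j, (B * V2⁻¹ * D * V1) ℓ j * ψ j z := by
  -- matrix equality from equality of induced functions
  have hext : ∀ A A' : Matrix (Fin N) (Fin N) ℂ,
      (∀ (j : Fin N) (x : Fin d → ℝ), ∑ k, A j k * ψ k x = ∑ k, A' j k * ψ k x) → A = A' := by
    intro A A' hAA
    ext j k
    have h0 := hli (fun k => A j k - A' j k) (by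
      intro x
      simp only [sub_mul, Finset.sum_sub_distrib, hAA j x, sub_self])
    have := congrFun h0 k
    simpa [sub_eq_zero] using this
  -- expansion of ψ ∘ h via V2*H
  have hVH : ∀ (j : Fin N) (x : Fin d → ℝ),
      ∑ m, (V2 * H) j m * ψ m x = ∑ k, V2 j k * ψ k (h x) := by
    intro j x
    rw [mul_apply_sum']
    exact Finset.sum_congr rfl fun k _ => by rw [hH k x]
  -- key eigen-relation for V2*H
  have hcomm0 : V2 * H * K1 = Matrix.diagonal Λ * (V2 * H) := by
    apply hext
    intro j x
    have lhs : ∑ k, (V2 * H * K1) j k * ψ k x = ∑ k, V2 j k * ψ k (h (T1 x)) := by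
      rw [mul_apply_sum', ← hVH j (T1 x)]
      exact Finset.sum_congr rfl fun k _ => by rw [hK1 k x]
    have mid : ∑ k, V2 j k * ψ k (h (T1 x)) = Λ j * ∑ k, V2 j k * ψ k (h x) := by
      calc ∑ k, V2 j k * ψ k (h (T1 x)) = ∑ k, V2 j k * ψ k (T2 (h x)) := by
            simp [hconj x]
        _ = ∑ m, (V2 * K2) j m * ψ m (h x) := by
            rw [mul_apply_sum']
            exact Finset.sum_congr rfl fun k _ => by rw [hK2 k (h x)]
        _ = ∑ m, (Matrix.diagonal Λ * V2) j m * ψ m (h x) := by rw [hdiag2]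
        _ = Λ j * ∑ k, V2 j k * ψ k (h x) := by
            simp [Matrix.diagonal_mul, Finset.mul_sum, mul_assoc]
    have rhs : ∑ k, (Matrix.diagonal Λ * (V2 * H)) j k * ψ k x
        = Λ j * ∑ k, V2 j k * ψ k (h x) := by
      calc ∑ k, (Matrix.diagonal Λ * (V2 * H)) j k * ψ k x
          = Λ j * ∑ k, (V2 * H) j k * ψ k x := by
            simp [Matrix.diagonal_mul, Finset.mul_sum, mul_assoc]
        _ = Λ j * ∑ k, V2 j k * ψ k (h x) := by rw [hVH]
    rw [lhs, mid, rhs]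
  -- the transfer matrix
  set M := V2 * H * V1⁻¹ with hM
  have hMV1 : M * V1 = V2 * H := by
    rw [hM, Matrix.nonsing_inv_mul_cancel_right _ _ hV1]
  have hK1eq : V1⁻¹ * (Matrix.diagonal Λ * V1) = K1 := by
    rw [← hdiag1, Matrix.nonsing_inv_mul_cancel_left _ _ hV1]
  have hcomm : M * Matrix.diagonal Λ = Matrix.diagonal Λ * M := by
    have : M * Matrix.diagonal Λ * V1 = Matrix.diagonal Λ * M * V1 := by
      calc M * Matrix.diagonal Λ * V1 = M * (Matrix.diagonal Λ * V1) := by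
            rw [Matrix.mul_assoc]
        _ = (V2 * H) * (V1⁻¹ * (Matrix.diagonal Λ * V1)) := by
            rw [hM, Matrix.mul_assoc]
        _ = V2 * H * K1 := by rw [hK1eq]
        _ = Matrix.diagonal Λ * (V2 * H) := hcomm0
        _ = Matrix.diagonal Λ * (M * V1) := by rw [hMV1]
        _ = Matrix.diagonal Λ * M * V1 := (Matrix.mul_assoc _ _ _).symm
    calc M * Matrix.diagonal Λ = M * Matrix.diagonal Λ * V1 * V1⁻¹ := by
          rw [Matrix.mul_nonsing_inv_cancel_right _ _ hV1]
      _ = Matrix.diagonal Λ * M * V1 * V1⁻¹ := by rw [this]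
      _ = Matrix.diagonal Λ * M := by rw [Matrix.mul_nonsing_inv_cancel_right _ _ hV1]
  -- M is diagonal
  have hMdiag : M = Matrix.diagonal (fun i => M i i) := by
    ext i j
    by_cases hij : i = j
    · subst hij; simp
    · have := congrFun (congrFun hcomm i) j
      simp only [Matrix.mul_diagonal, Matrix.diagonal_mul] at this
      have hΛne : Λ j ≠ Λ i := fun hc => hij (hΛ hc).symm
      have : M i j * (Λ j - Λ i) = 0 := by ring_nf; linear_combination this
      rcases mul_eq_zero.mp this with h1 | h2
      · simp [h1, Matrix.diagonal, hij]
      · exact absurd (sub_eq_zero.mp h2) hΛne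
  -- evaluate at z₀ to identify M with D
  have hMD : M = D := by
    rw [hD, hMdiag]
    apply congrArg Matrix.diagonal
    funext j
    have e1 : ∑ m, (M * V1) j m * ψ m z₀ = M j j * ∑ k, V1 j k * ψ k z₀ := by
      conv_lhs => rw [hMdiag]
      simp [Matrix.diagonal_mul, Finset.mul_sum, mul_assoc]
    have e2 : ∑ m, (M * V1) j m * ψ m z₀ = ∑ k, V2 j k * ψ k (h z₀) := by
      rw [hMV1]; exact hVH j z₀
    have key := e1.symm.trans e2
    rw [eq_div_iff (hz₀ j)]
    exact key
  -- conclusion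
  intro z ℓ
  have hDV1 : D * V1 = V2 * H := by rw [← hMD]; exact hMV1
  have hfin : B * V2⁻¹ * D * V1 = B * H := by
    calc B * V2⁻¹ * D * V1 = B * (V2⁻¹ * (V2 * H)) := by
          rw [Matrix.mul_assoc, Matrix.mul_assoc, hDV1]
      _ = B * H := by rw [Matrix.nonsing_inv_mul_cancel_left _ _ hV2]
  calc ((h z) ℓ : ℂ) = ∑ j, B ℓ j * ψ j (h z) := hB ℓ (h z)
    _ = ∑ j, B ℓ j * ∑ k, H j k * ψ k z :=
        Finset.sum_congr rfl fun j _ => by rw [hH]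
    _ = ∑ j, (B * H) ℓ j * ψ j z := (mul_apply_sum' B H ℓ _).symm
    _ = ∑ j, (B * V2⁻¹ * D * V1) ℓ j * ψ j z := by rw [hfin]
end

section
/- Let a₁, a₂ ∈ ℝ and let F : ℝ × ℝ → ℝ × ℝ be the vector field F (x₁, x₂) = ( −2 a₂ x₂ (x₁² − x₂ − 2 x₁ x₂² + x₂⁴) + a₁ (x₁ + 4 x₁² x₂ − x₂² − 8 x₁ x₂³ + 4 x₂⁵), 2 a₁ (x₁ − x₂²)² − a₂ (x₁² − x₂ − 2 x₁ x₂² + x₂⁴) ). Let I ⊆ ℝ be an open interval and let x = (x₁, x₂) : I → ℝ × ℝ be differentiable with x'(t) = F (x t) for all t ∈ I. Define y₁ t = x₁ t − (x₂ t)² and y₂ t = −(x₁ t)² + x₂ t + 2 (x₁ t) (x₂ t)² − (x₂ t)⁴. Then y₁'(t) = a₁ * y₁ t and y₂'(t) = a₂ * y₂ t for all t ∈ I. That is, the change of variables y = h(x) built from the matched Koopman eigenfunctions transforms the nonlinear system ẋ = F(x) into the diagonal linear system ẏ = diag(a₁, a₂) y. (Example 3 of the paper.) -/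
/-!
Both components of `h` are Koopman eigenfunctions of `F`: their gradients satisfy
`∇hᵢ · F = aᵢ hᵢ`, a polynomial identity. By the chain rule, `hᵢ` evaluated along any
solution of `ẋ = F(x)` therefore satisfies `ẏᵢ = aᵢ yᵢ`.
-/

open ContinuousLinearMap

section Koopman

variable {E : Type*} [NormedAddCommGroup E] [NormedSpace ℝ E]

def IsKoopmanEigenfunction (F : E → E) (φ : E → ℝ) (a : ℝ) : Prop :=
  Differentiable ℝ φ ∧ ∀ p, fderiv ℝ φ p (F p) = a * φ p

theorem IsKoopmanEigenfunction.hasDerivAt_comp {F : E → E} {φ : E → ℝ} {a : ℝ}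
    (hφ : IsKoopmanEigenfunction F φ a) {x : ℝ → E} {t : ℝ} (hx : HasDerivAt x (F (x t)) t) :
    HasDerivAt (φ ∘ x) (a * φ (x t)) t :=
  hφ.2 (x t) ▸ (hφ.1 (x t)).hasFDerivAt.comp_hasDerivAt t hx

end Koopman

namespace KoopmanExample

def field (a₁ a₂ : ℝ) (p : ℝ × ℝ) : ℝ × ℝ :=
  (-2*a₂*p.2*(p.1^2 - p.2 - 2*p.1*p.2^2 + p.2^4)
      + a₁*(p.1 + 4*p.1^2*p.2 - p.2^2 - 8*p.1*p.2^3 + 4*p.2^5),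
    2*a₁*(p.1 - p.2^2)^2 - a₂*(p.1^2 - p.2 - 2*p.1*p.2^2 + p.2^4))

def eigenfunction₁ (p : ℝ × ℝ) : ℝ := p.1 - p.2^2

def eigenfunction₂ (p : ℝ × ℝ) : ℝ := -p.1^2 + p.2 + 2*p.1*p.2^2 - p.2^4

theorem hasFDerivAt_eigenfunction₁ (p : ℝ × ℝ) :
    HasFDerivAt eigenfunction₁ (fst ℝ ℝ ℝ - (2 * p.2) • snd ℝ ℝ ℝ) p :=
  (hasFDerivAt_fst.fun_sub (hasFDerivAt_snd.pow 2)).congr_fderiv (by ext <;> simp)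

theorem hasFDerivAt_eigenfunction₂ (p : ℝ × ℝ) :
    HasFDerivAt eigenfunction₂
      ((2 * p.2^2 - 2 * p.1) • fst ℝ ℝ ℝ + (1 + 4 * p.1 * p.2 - 4 * p.2^3) • snd ℝ ℝ ℝ) p := by
  have h₁ := hasFDerivAt_fst (𝕜 := ℝ) (p := p)
  have h₂ := hasFDerivAt_snd (𝕜 := ℝ) (p := p)
  refine ((((h₁.pow 2).fun_neg.fun_add h₂).fun_add
    ((h₁.const_mul 2).fun_mul (h₂.pow 2))).fun_sub (h₂.pow 4)).congr_fderiv ?_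
  ext <;> simp only [Nat.add_one_sub_one, pow_one, nsmul_eq_mul, Nat.cast_ofNat, sub_comp, add_comp,
    neg_comp, smul_comp, fst_comp_inl, snd_comp_inl, fst_comp_inr, snd_comp_inr, add_apply, sub_apply,
    neg_apply, smul_apply, id_apply, smul_eq_mul, smul_zero, neg_zero, add_zero, zero_add, sub_zero,
    mul_one] <;> ring

theorem isKoopmanEigenfunction_eigenfunction₁ (a₁ a₂ : ℝ) :
    IsKoopmanEigenfunction (field a₁ a₂) eigenfunction₁ a₁ := by
  refine ⟨fun p => (hasFDerivAt_eigenfunction₁ p).differentiableAt, fun p => ?_⟩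
  rw [(hasFDerivAt_eigenfunction₁ p).fderiv]
  simp only [field, eigenfunction₁, sub_apply, smul_apply, coe_fst', coe_snd', smul_eq_mul]
  ring

theorem isKoopmanEigenfunction_eigenfunction₂ (a₁ a₂ : ℝ) :
    IsKoopmanEigenfunction (field a₁ a₂) eigenfunction₂ a₂ := by
  refine ⟨fun p => (hasFDerivAt_eigenfunction₂ p).differentiableAt, fun p => ?_⟩
  rw [(hasFDerivAt_eigenfunction₂ p).fderiv]
  simp only [field, eigenfunction₂, add_apply, smul_apply, coe_fst', coe_snd', smul_eq_mul]
  ring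

end KoopmanExample

theorem quadratic_example_diagonalizes_general
    (a₁ a₂ : ℝ) (I : Set ℝ)
    (x₁ x₂ : ℝ → ℝ)
    (hx₁ : ∀ t ∈ I, HasDerivAt x₁
      (-2*a₂*(x₂ t)*((x₁ t)^2 - x₂ t - 2*(x₁ t)*(x₂ t)^2 + (x₂ t)^4)
        + a₁*(x₁ t + 4*(x₁ t)^2*(x₂ t) - (x₂ t)^2 - 8*(x₁ t)*(x₂ t)^3 + 4*(x₂ t)^5)) t)
    (hx₂ : ∀ t ∈ I, HasDerivAt x₂
      (2*a₁*(x₁ t - (x₂ t)^2)^2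
        - a₂*((x₁ t)^2 - x₂ t - 2*(x₁ t)*(x₂ t)^2 + (x₂ t)^4)) t) :
    ∀ t ∈ I,
      HasDerivAt (fun s => x₁ s - (x₂ s)^2) (a₁ * (x₁ t - (x₂ t)^2)) t ∧
      HasDerivAt (fun s => -(x₁ s)^2 + x₂ s + 2*(x₁ s)*(x₂ s)^2 - (x₂ s)^4)
        (a₂ * (-(x₁ t)^2 + x₂ t + 2*(x₁ t)*(x₂ t)^2 - (x₂ t)^4)) t := by
  intro t ht
  have hx : HasDerivAt (fun s => (x₁ s, x₂ s)) (KoopmanExample.field a₁ a₂ (x₁ t, x₂ t)) t :=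
    (hx₁ t ht).prodMk (hx₂ t ht)
  exact ⟨(KoopmanExample.isKoopmanEigenfunction_eigenfunction₁ a₁ a₂).hasDerivAt_comp hx,
    (KoopmanExample.isKoopmanEigenfunction_eigenfunction₂ a₁ a₂).hasDerivAt_comp hx⟩

/-- Example 3 of the paper: the change of variables built from the matched Koopman
eigenfunctions transforms solutions of the nonlinear system ẋ = F(x) into solutions of the
diagonal linear system ẏ = diag(a₁,a₂) y. -/
theorem quadratic_example_diagonalizes
    (a₁ a₂ : ℝ) (I : Set ℝ) (hIopen : IsOpen I) (hIconn : I.OrdConnected)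
    (x₁ x₂ : ℝ → ℝ)
    (hx₁ : ∀ t ∈ I, HasDerivAt x₁
      (-2*a₂*(x₂ t)*((x₁ t)^2 - x₂ t - 2*(x₁ t)*(x₂ t)^2 + (x₂ t)^4)
        + a₁*(x₁ t + 4*(x₁ t)^2*(x₂ t) - (x₂ t)^2 - 8*(x₁ t)*(x₂ t)^3 + 4*(x₂ t)^5)) t)
    (hx₂ : ∀ t ∈ I, HasDerivAt x₂
      (2*a₁*(x₁ t - (x₂ t)^2)^2
        - a₂*((x₁ t)^2 - x₂ t - 2*(x₁ t)*(x₂ t)^2 + (x₂ t)^4)) t) :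
    ∀ t ∈ I,
      HasDerivAt (fun s => x₁ s - (x₂ s)^2) (a₁ * (x₁ t - (x₂ t)^2)) t ∧
      HasDerivAt (fun s => -(x₁ s)^2 + x₂ s + 2*(x₁ s)*(x₂ s)^2 - (x₂ s)^4)
        (a₂ * (-(x₁ t)^2 + x₂ t + 2*(x₁ t)*(x₂ t)^2 - (x₂ t)^4)) t :=
  quadratic_example_diagonalizes_general a₁ a₂ I x₁ x₂ hx₁ hx₂
end

section
/- Let a, b, λ ∈ ℝ with a ≠ 0 and b ≠ 0, and let g₀ : ℝ × ℝ → ℝ be an arbitrary function. For x ∈ ℝ and y > 0, set r (x, y) = x^2 + y^(2*a/b) (real power) and define g (x, y) = (r (x, y))^(λ/(2*a)) * g₀ ( x / (r (x, y))^(1/2), y / (r (x, y))^(b/(2*a)) ). Then for all t ∈ ℝ, all x ∈ ℝ and all y > 0, g (Real.exp (a*t) * x, Real.exp (b*t) * y) = Real.exp (λ*t) * g (x, y). That is, for every choice of the initial-data function g₀ on the initial set Σ, the function g is a Koopman eigenfunction, with the same eigenvalue λ, of the flow S_t(x,y) = (e^{at} x, e^{bt} y) of the diagonal linear field F(x,y)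 = (a x, b y); this exhibits an uncountable family of eigenfunctions for a single eigenvalue (nontrivial geometric multiplicity). (Appendix B, Example 2 of the paper.) -/
/-!
The flow scales the quasi-homogeneous radius `r = x^2 + y^(2a/b)` by `e^{2at}`, so
`r^(λ/(2a))` picks up exactly the factor `e^{λt}`, while the point
`(x / r^(1/2), y / r^(b/(2a)))` of the level set `{r = 1}` is invariant along orbits;
hence the factor `g₀(…)` does not change, whatever `g₀` is.
-/

open Real

lemma exp_mul_mul_rpow (s : ℝ) {z : ℝ} (hz : 0 ≤ z) (c : ℝ) :
    (exp s * z) ^ c = exp (s * c) * z ^ c := by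
  rw [mul_rpow (exp_pos s).le hz, exp_mul]

/-- The function obtained from initial data `g₀` on `{r = 1}` by the method of characteristics,
as a function of the value `ρ` of the radius at `(x, y)`. -/
noncomputable def characteristicLift (a b lam : ℝ) (g₀ : ℝ × ℝ → ℝ) (ρ x y : ℝ) : ℝ :=
  ρ ^ (lam / (2 * a)) * g₀ (x / ρ ^ ((1 : ℝ) / 2), y / ρ ^ (b / (2 * a)))

lemma characteristicLift_flow {a : ℝ} (ha : a ≠ 0) (b lam : ℝ) (g₀ : ℝ × ℝ → ℝ)
    {ρ : ℝ} (hρ : 0 ≤ ρ) (t x y : ℝ) :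
    characteristicLift a b lam g₀ (exp (2 * a * t) * ρ) (exp (a * t) * x) (exp (b * t) * y) =
      exp (lam * t) * characteristicLift a b lam g₀ ρ x y := by
  have hlam : 2 * a * t * (lam / (2 * a)) = lam * t := by field_simp
  have hx : 2 * a * t * ((1 : ℝ) / 2) = a * t := by ring
  have hy : 2 * a * t * (b / (2 * a)) = b * t := by field_simp
  simp only [characteristicLift, exp_mul_mul_rpow _ hρ, hlam, hx, hy,
    mul_div_mul_left _ _ (exp_ne_zero _)]
  ring

lemma sq_add_rpow_flow (a : ℝ) {b : ℝ} (hb : b ≠ 0) (t x : ℝ) {y : ℝ} (hy : 0 ≤ y) :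
    (exp (a * t) * x) ^ 2 + (exp (b * t) * y) ^ (2 * a / b) =
      exp (2 * a * t) * (x ^ 2 + y ^ (2 * a / b)) := by
  have hexp : b * t * (2 * a / b) = 2 * a * t := by field_simp
  have hsq : exp (a * t) ^ 2 = exp (2 * a * t) := by rw [← exp_nat_mul]; ring_nf
  rw [exp_mul_mul_rpow _ hy, hexp, mul_pow, hsq, mul_add]

/-- Appendix B, Example 2 of the paper: for every choice of initial data g₀, the function
g obtained by the method of characteristics is a Koopman eigenfunction with eigenvalue λ
of the flow S_t(x,y) = (e^{at} x, e^{bt} y) of the diagonal linear field F(x,y) = (ax, by);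
this exhibits nontrivial geometric multiplicity. -/
theorem diagonal_linear_koopman_eigenfunction_family
    (a b lam : ℝ) (ha : a ≠ 0) (hb : b ≠ 0)
    (g₀ : ℝ × ℝ → ℝ) (r g : ℝ → ℝ → ℝ)
    (hr : ∀ x y : ℝ, r x y = x^2 + y^(2*a/b))
    (hg : ∀ x y : ℝ, g x y = (r x y)^(lam/(2*a)) *
      g₀ (x / (r x y)^((1:ℝ)/2), y / (r x y)^(b/(2*a)))) :
    ∀ (t x y : ℝ), 0 < y →
      g (Real.exp (a*t) * x) (Real.exp (b*t) * y) = Real.exp (lam*t) * g x y := by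
  intro t x y hy
  have hg' : ∀ x y, g x y = characteristicLift a b lam g₀ (r x y) x y := hg
  have hr_nonneg : 0 ≤ r x y := by
    rw [hr]
    have := rpow_nonneg hy.le (2 * a / b)
    positivity
  have hr_flow : r (exp (a * t) * x) (exp (b * t) * y) = exp (2 * a * t) * r x y := by
    rw [hr, hr, sq_add_rpow_flow a hb t x hy.le]
  rw [hg', hg', hr_flow, characteristicLift_flow ha b lam g₀ hr_nonneg]
end
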